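/- Let d ≥ 1 and s ≥ 1 be integers, and let f : ℝ^d → ℂ be of class C^{2s} with D^α f integrable for every multi-index α with |α| ≤ 2s. Then there exists a constant C > 0 depending only on d and s such that for all x ∈ ℝ^d, η > 0, and ε > 0, | ∫_{‖ξ‖ ≥ η} e^{2πi x·ξ} e^{-π ε² ‖ξ‖²} f̂(ξ) dξ | ≤ C (∑_{|α| ≤ 2s} ‖D^α f‖_{L¹(ℝ^d)}) ε^{-d} η^{-2s}, where the integral converges absolutely. -/

import Mathlib

open MeasureTheory Filter Real

/-- The Fourier transform `f̂(ξ) = ∫_{ℝ^d} e^{-2πi x·ξ} f(x) dx` of `f : ℝ^d → ℂ`. -/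
noncomputable def FT {d : ℕ} (f : EuclideanSpace ℝ (Fin d) → ℂ)
    (ξ : EuclideanSpace ℝ (Fin d)) : ℂ :=
  ∫ x : EuclideanSpace ℝ (Fin d),
    Complex.exp ((-2 * π * Complex.I) * ((inner ℝ x ξ : ℝ) : ℂ)) * f x

/-- The partial derivative `∂_{x_i} f` of `f : ℝ^d → ℂ`. -/
noncomputable def pderiv' {d : ℕ} (i : Fin d) (f : EuclideanSpace ℝ (Fin d) → ℂ) :
    EuclideanSpace ℝ (Fin d) → ℂ :=
  fun x => fderiv ℝ f x (EuclideanSpace.single i 1)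

/-- The multi-index derivative `D^α f = ∂^{α_1}_{x_1} ⋯ ∂^{α_d}_{x_d} f` of `f : ℝ^d → ℂ`. -/
noncomputable def mderiv {d : ℕ} (α : Fin d → ℕ) (f : EuclideanSpace ℝ (Fin d) → ℂ) :
    EuclideanSpace ℝ (Fin d) → ℂ :=
  (List.finRange d).foldr (fun i g => (pderiv' i)^[α i] g) f

/-- The (finite) set of multi-indices `α` on `ℝ^d` with `|α| ≤ M`. -/
def mIdx (d M : ℕ) : Finset (Fin d → ℕ) :=
  (Fintype.piFinset fun _ : Fin d => Finset.range (M + 1)).filter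
    fun α => (∑ i, α i) ≤ M

open FourierTransform

/-!
Integrating by parts `2s` times bounds `‖ξ‖^{2s} |f̂(ξ)|` by `2^{2s} ∑_{n ≤ 2s} ‖D^n f‖_{L¹}`.
Expanding the `n`-linear map `D^n f(x)` in the standard basis bounds its norm by the `d^n`
iterated partial derivatives `∂_{b_1} ⋯ ∂_{b_n} f(x)`, and by the symmetry of mixed partials each
of these is some `D^α f(x)` with `|α| = n`. Hence `|f̂| ≲ (∑_{|α| ≤ 2s} ‖D^α f‖_{L¹}) η^{-2s}` on
`{‖ξ‖ ≥ η}`, and the Gaussian factor integrates to `ε^{-d}`.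
-/

noncomputable def pderivList {d : ℕ} (l : List (Fin d)) (f : EuclideanSpace ℝ (Fin d) → ℂ) :
    EuclideanSpace ℝ (Fin d) → ℂ :=
  l.foldr pderiv' f

def coordList {d : ℕ} (α : Fin d → ℕ) : List (Fin d) :=
  (List.finRange d).flatMap fun i => List.replicate (α i) i

section PartialDerivatives

variable {d : ℕ}

@[simp] lemma pderivList_nil (f : EuclideanSpace ℝ (Fin d) → ℂ) : pderivList [] f = f := rfl

@[simp] lemma pderivList_cons (i : Fin d) (l : List (Fin d))
    (f : EuclideanSpace ℝ (Fin d) → ℂ) :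
    pderivList (i :: l) f = pderiv' i (pderivList l f) := rfl

lemma pderivList_append (l₁ l₂ : List (Fin d)) (f : EuclideanSpace ℝ (Fin d) → ℂ) :
    pderivList (l₁ ++ l₂) f = pderivList l₁ (pderivList l₂ f) :=
  List.foldr_append ..

lemma pderivList_replicate (k : ℕ) (i : Fin d) (f : EuclideanSpace ℝ (Fin d) → ℂ) :
    pderivList (List.replicate k i) f = (pderiv' i)^[k] f := by
  induction k with
  | zero => rfl
  | succ k ih => rw [List.replicate_succ, pderivList_cons, ih, Function.iterate_succ_apply']

lemma mderiv_eq_pderivList (α : Fin d → ℕ) (f : EuclideanSpace ℝ (Fin d) → ℂ) :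
    mderiv α f = pderivList (coordList α) f := by
  unfold mderiv coordList
  induction List.finRange d with
  | nil => rfl
  | cons i L ih => rw [List.foldr_cons, ih, List.flatMap_cons, pderivList_append,
      pderivList_replicate]

lemma mderiv_zero (f : EuclideanSpace ℝ (Fin d) → ℂ) : mderiv (fun _ => 0) f = f := by
  rw [mderiv_eq_pderivList, show coordList (fun _ => 0 : Fin d → ℕ) = [] from
    List.flatMap_eq_nil_iff.2 fun _ _ => rfl, pderivList_nil]

lemma count_coordList (α : Fin d → ℕ) (i : Fin d) : (coordList α).count i = α i := by
  simp [coordList, List.count_flatMap, List.count_replicate, ← Fin.sum_univ_def]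

lemma sum_count_eq_length (l : List (Fin d)) : ∑ i, l.count i = l.length := by
  simpa using Multiset.sum_count_eq_card (s := Finset.univ) (m := (l : Multiset (Fin d))) (by simp)

variable {f : EuclideanSpace ℝ (Fin d) → ℂ}

lemma ContDiff.pderiv' {n : ℕ} (i : Fin d) (hf : ContDiff ℝ (n + 1 : ℕ) f) :
    ContDiff ℝ n (pderiv' i f) :=
  (hf.fderiv_right (by norm_cast)).clm_apply contDiff_const

lemma ContDiff.pderivList (l : List (Fin d)) {n : ℕ} (hf : ContDiff ℝ (n + l.length : ℕ) f) :
    ContDiff ℝ n (pderivList l f) := by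
  induction l generalizing n with
  | nil => simpa using hf
  | cons i l ih =>
    have hf' : ContDiff ℝ (n + 1 + l.length : ℕ) f := by
      rwa [List.length_cons, ← add_assoc, add_right_comm] at hf
    exact (ih hf').pderiv' i

lemma iteratedFDeriv_apply_single_eq_pderivList {N n : ℕ} (hf : ContDiff ℝ N f) (hn : n ≤ N)
    (b : Fin n → Fin d) :
    (fun x => iteratedFDeriv ℝ n f x (fun j => EuclideanSpace.single (b j) 1)) =
      pderivList (List.ofFn b) f := by
  induction n with
  | zero => ext x; simp
  | succ n ih =>
    have hdiff : Differentiable ℝ (iteratedFDeriv ℝ n f) :=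
      hf.differentiable_iteratedFDeriv (by norm_cast)
    ext x
    rw [List.ofFn_succ, pderivList_cons, ← ih (by omega), iteratedFDeriv_succ_apply_left, pderiv',
      fderiv_continuousMultilinear_apply_const_apply (hdiff x)]
    rfl

lemma pderiv'_comm (hf : ContDiff ℝ 2 f) (i j : Fin d) :
    pderiv' i (pderiv' j f) = pderiv' j (pderiv' i f) := by
  have h (a b : Fin d) : pderiv' a (pderiv' b f) = fun x =>
      iteratedFDeriv ℝ 2 f x ![EuclideanSpace.single a 1, EuclideanSpace.single b 1] := by
    rw [show ![EuclideanSpace.single a (1 : ℝ), EuclideanSpace.single b 1] =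
        fun k => EuclideanSpace.single (![a, b] k) 1 by ext k : 1; fin_cases k <;> rfl,
      iteratedFDeriv_apply_single_eq_pderivList (N := 2) (by exact_mod_cast hf) le_rfl]
    simp [List.ofFn_succ]
  ext x
  rw [h, h]
  exact (hf.contDiffAt.isSymmSndFDerivAt (by simp)).iteratedFDeriv_cons

lemma pderivList_perm {N : ℕ} (hf : ContDiff ℝ N f) {l₁ l₂ : List (Fin d)} (h : l₁.Perm l₂)
    (hl : l₁.length ≤ N) : pderivList l₁ f = pderivList l₂ f := by
  induction h with
  | nil => rfl
  | cons i _ ih => simp only [pderivList_cons, ih (Nat.le_of_succ_le hl)]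
  | swap i j l =>
    simp only [List.length_cons] at hl
    exact pderiv'_comm ((hf.of_le (by norm_cast; omega)).pderivList l) j i
  | trans h₁₂ _ ih₁₂ ih₂₃ => rw [ih₁₂ hl, ih₂₃ (h₁₂.length_eq ▸ hl)]

lemma pderivList_eq_mderiv_count {N : ℕ} (hf : ContDiff ℝ N f) (l : List (Fin d))
    (hl : l.length ≤ N) : pderivList l f = mderiv (fun i => l.count i) f := by
  rw [mderiv_eq_pderivList]
  exact pderivList_perm hf
    (List.perm_iff_count.2 fun i => (count_coordList (l.count ·) i).symm) hl

end PartialDerivatives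

theorem ContinuousMultilinearMap.norm_le_sum_norm_apply_orthonormalBasis {ι E F : Type*}
    [Fintype ι] [NormedAddCommGroup E] [InnerProductSpace ℝ E] [NormedAddCommGroup F]
    [NormedSpace ℝ F] {n : ℕ} (b : OrthonormalBasis ι ℝ E)
    (m : ContinuousMultilinearMap ℝ (fun _ : Fin n => E) F) :
    ‖m‖ ≤ ∑ c : Fin n → ι, ‖m fun j => b (c j)‖ := by
  refine m.opNorm_le_bound (Finset.sum_nonneg fun _ _ => norm_nonneg _) fun v => ?_
  have expand : m v = ∑ c : Fin n → ι, (∏ j, inner ℝ (b (c j)) (v j)) • m fun j => b (c j) := by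
    conv_lhs => rw [← funext fun j => b.sum_repr' (v j)]
    simp only [map_sum, map_smul_univ]
  rw [expand, Finset.sum_mul]
  refine (norm_sum_le _ _).trans (Finset.sum_le_sum fun c _ => ?_)
  rw [norm_smul, mul_comm, norm_prod]
  gcongr with j
  simpa [b.orthonormal.1] using norm_inner_le_norm (𝕜 := ℝ) (b (c j)) (v j)

section IteratedFDeriv

variable {d N : ℕ} {f : EuclideanSpace ℝ (Fin d) → ℂ}

lemma norm_iteratedFDeriv_le_sum_norm_mderiv (hf : ContDiff ℝ N f) {n : ℕ} (hn : n ≤ N)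
    (x : EuclideanSpace ℝ (Fin d)) :
    ‖iteratedFDeriv ℝ n f x‖ ≤
      ∑ b : Fin n → Fin d, ‖mderiv (fun i => (List.ofFn b).count i) f x‖ := by
  refine ((iteratedFDeriv ℝ n f x).norm_le_sum_norm_apply_orthonormalBasis
    (EuclideanSpace.basisFun (Fin d) ℝ)).trans_eq (Finset.sum_congr rfl fun b _ => ?_)
  simp only [EuclideanSpace.basisFun_apply]
  rw [congrFun (iteratedFDeriv_apply_single_eq_pderivList hf hn b) x,
    pderivList_eq_mderiv_count hf _ (by simpa using hn)]

lemma count_ofFn_mem_mIdx {n : ℕ} (hn : n ≤ N) (b : Fin n → Fin d) :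
    (fun i => (List.ofFn b).count i) ∈ mIdx d N := by
  have hsum : ∑ i, (List.ofFn b).count i = n := by rw [sum_count_eq_length, List.length_ofFn]
  refine Finset.mem_filter.2
    ⟨Fintype.mem_piFinset.2 fun i => Finset.mem_range.2 ?_, by beta_reduce; omega⟩
  have := Finset.single_le_sum (fun j _ => Nat.zero_le ((List.ofFn b).count j)) (Finset.mem_univ i)
  omega

lemma integrable_mderiv_count_ofFn
    (hint : ∀ α : Fin d → ℕ, ∑ i, α i ≤ N → Integrable (mderiv α f)) {n : ℕ} (hn : n ≤ N)
    (b : Fin n → Fin d) :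
    Integrable (mderiv (fun i => (List.ofFn b).count i) f) :=
  hint _ (by rwa [sum_count_eq_length, List.length_ofFn])

lemma integrable_iteratedFDeriv_of_integrable_mderiv
    (hint : ∀ α : Fin d → ℕ, ∑ i, α i ≤ N → Integrable (mderiv α f)) (hf : ContDiff ℝ N f)
    {n : ℕ} (hn : n ≤ N) :
    Integrable (iteratedFDeriv ℝ n f) :=
  (integrable_finsetSum _ fun b _ => (integrable_mderiv_count_ofFn hint hn b).norm).mono'
    (hf.continuous_iteratedFDeriv (by exact_mod_cast hn)).aestronglyMeasurable
    (.of_forall (norm_iteratedFDeriv_le_sum_norm_mderiv hf hn))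

lemma integral_norm_iteratedFDeriv_le
    (hint : ∀ α : Fin d → ℕ, ∑ i, α i ≤ N → Integrable (mderiv α f)) (hf : ContDiff ℝ N f)
    {n : ℕ} (hn : n ≤ N) :
    ∫ x, ‖iteratedFDeriv ℝ n f x‖ ≤ d ^ n * ∑ α ∈ mIdx d N, ∫ y, ‖mderiv α f y‖ := by
  have hint_b (b : Fin n → Fin d) := (integrable_mderiv_count_ofFn hint hn b).norm
  calc ∫ x, ‖iteratedFDeriv ℝ n f x‖
      ≤ ∫ x, ∑ b : Fin n → Fin d, ‖mderiv (fun i => (List.ofFn b).count i) f x‖ :=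
        integral_mono_of_nonneg (.of_forall fun _ => norm_nonneg _)
          (integrable_finsetSum _ fun b _ => hint_b b)
          (.of_forall (norm_iteratedFDeriv_le_sum_norm_mderiv hf hn))
    _ = ∑ b : Fin n → Fin d, ∫ x, ‖mderiv (fun i => (List.ofFn b).count i) f x‖ :=
        integral_finsetSum _ fun b _ => hint_b b
    _ ≤ ∑ _b : Fin n → Fin d, ∑ α ∈ mIdx d N, ∫ y, ‖mderiv α f y‖ :=
        Finset.sum_le_sum fun b _ => Finset.single_le_sum (f := fun α => ∫ y, ‖mderiv α f y‖)
          (fun α _ => integral_nonneg fun y => norm_nonneg _) (count_ofFn_mem_mIdx hn b)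
    _ = d ^ n * ∑ α ∈ mIdx d N, ∫ y, ‖mderiv α f y‖ := by simp

end IteratedFDeriv

section Fourier

variable {V : Type*} [NormedAddCommGroup V] [InnerProductSpace ℝ V] [FiniteDimensional ℝ V]
  [MeasurableSpace V] [BorelSpace V]

lemma pow_mul_norm_fourier_le {E : Type*} [NormedAddCommGroup E] [NormedSpace ℂ E]
    {f : V → E} {N : ℕ} (hf : ContDiff ℝ N f)
    (hint : ∀ n ≤ N, Integrable (iteratedFDeriv ℝ n f)) (ξ : V) :
    ‖ξ‖ ^ N * ‖𝓕 f ξ‖ ≤ 2 ^ N * ∑ n ∈ Finset.range (N + 1), ∫ v, ‖iteratedFDeriv ℝ n f v‖ := by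
  have hint_norm (k n : ℕ) (hk : (k : ℕ∞) ≤ 0) (hn : (n : ℕ∞) ≤ N) :
      Integrable fun v => ‖v‖ ^ k * ‖iteratedFDeriv ℝ n f v‖ := by
    obtain rfl : k = 0 := by exact_mod_cast nonpos_iff_eq_zero.1 hk
    simpa using (hint n (by exact_mod_cast hn)).norm
  simpa using Real.pow_mul_norm_iteratedFDeriv_fourier_le (by exact_mod_cast hf) hint_norm le_rfl
    le_rfl ξ

lemma integral_rexp_neg_pi_sq_mul_sq_norm {ε : ℝ} (hε : 0 < ε) :
    ∫ ξ : V, rexp (-π * ε ^ 2 * ‖ξ‖ ^ 2) = (ε ^ Module.finrank ℝ V)⁻¹ := by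
  rw [neg_mul, GaussianFourier.integral_rexp_neg_mul_sq_norm (by positivity),
    div_mul_cancel_left₀ pi_ne_zero, inv_rpow (by positivity), ← rpow_natCast, ← rpow_mul hε.le,
    Nat.cast_ofNat, mul_div_cancel₀ _ two_ne_zero, rpow_natCast]

lemma integrable_rexp_neg_pi_sq_mul_sq_norm {ε : ℝ} (hε : 0 < ε) :
    Integrable fun ξ : V => rexp (-π * ε ^ 2 * ‖ξ‖ ^ 2) :=
  .of_integral_ne_zero <| by rw [integral_rexp_neg_pi_sq_mul_sq_norm hε]; positivity

lemma integrableOn_and_norm_setIntegral_le_of_norm_le_gaussian {E : Type*}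
    [NormedAddCommGroup E] [NormedSpace ℝ E] {h : V → E} (hh : AEStronglyMeasurable h) {S : Set V}
    (hS : MeasurableSet S) {M ε : ℝ} (hM : 0 ≤ M) (hε : 0 < ε)
    (hbound : ∀ ξ ∈ S, ‖h ξ‖ ≤ M * rexp (-π * ε ^ 2 * ‖ξ‖ ^ 2)) :
    IntegrableOn h S ∧ ‖∫ ξ in S, h ξ‖ ≤ M * (ε ^ Module.finrank ℝ V)⁻¹ := by
  have hg := (integrable_rexp_neg_pi_sq_mul_sq_norm (V := V) hε).const_mul M
  have hbound' : ∀ᵐ ξ ∂volume.restrict S, ‖h ξ‖ ≤ M * rexp (-π * ε ^ 2 * ‖ξ‖ ^ 2) :=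
    (ae_restrict_iff' hS).2 (.of_forall hbound)
  refine ⟨hg.integrableOn.mono' hh.restrict hbound', ?_⟩
  calc ‖∫ ξ in S, h ξ‖ ≤ ∫ ξ in S, M * rexp (-π * ε ^ 2 * ‖ξ‖ ^ 2) :=
        norm_integral_le_of_norm_le hg.integrableOn hbound'
    _ ≤ ∫ ξ, M * rexp (-π * ε ^ 2 * ‖ξ‖ ^ 2) :=
        setIntegral_le_integral hg (.of_forall fun _ => by positivity)
    _ = M * (ε ^ Module.finrank ℝ V)⁻¹ := by
        rw [integral_const_mul, integral_rexp_neg_pi_sq_mul_sq_norm hε]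

end Fourier

lemma FT_eq_fourier {d : ℕ} (f : EuclideanSpace ℝ (Fin d) → ℂ) : FT f = 𝓕 f := by
  ext ξ
  rw [FT, Real.fourier_eq']
  congr 1 with x
  push_cast
  ring_nf

lemma pow_mul_norm_fourier_le_sum_integral_norm_mderiv {d N : ℕ}
    {f : EuclideanSpace ℝ (Fin d) → ℂ} (hf : ContDiff ℝ N f)
    (hint : ∀ α : Fin d → ℕ, ∑ i, α i ≤ N → Integrable (mderiv α f))
    (ξ : EuclideanSpace ℝ (Fin d)) :
    ‖ξ‖ ^ N * ‖𝓕 f ξ‖ ≤ (2 ^ N * ∑ n ∈ Finset.range (N + 1), (d : ℝ) ^ n) *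
      ∑ α ∈ mIdx d N, ∫ y, ‖mderiv α f y‖ := by
  refine (pow_mul_norm_fourier_le hf
    (fun n hn => integrable_iteratedFDeriv_of_integrable_mderiv hint hf hn) ξ).trans ?_
  rw [mul_assoc, Finset.sum_mul]
  gcongr with n hn
  exact integral_norm_iteratedFDeriv_le hint hf (Nat.lt_succ_iff.1 (Finset.mem_range.1 hn))

theorem high_frequency_loss_estimate_general (d s : ℕ) :
    ∃ C : ℝ, 0 < C ∧ ∀ f : EuclideanSpace ℝ (Fin d) → ℂ,
      ContDiff ℝ (2 * s) f →
      (∀ α : Fin d → ℕ, (∑ i, α i) ≤ 2 * s → Integrable (mderiv α f)) →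
      ∀ x : EuclideanSpace ℝ (Fin d), ∀ η : ℝ, 0 < η → ∀ ε : ℝ, 0 < ε →
        IntegrableOn (fun ξ : EuclideanSpace ℝ (Fin d) =>
            Complex.exp ((2 * π * Complex.I) * ((inner ℝ x ξ : ℝ) : ℂ)) *
              ((Real.exp (-π * ε ^ 2 * ‖ξ‖ ^ 2) : ℂ) * FT f ξ))
          {ξ : EuclideanSpace ℝ (Fin d) | η ≤ ‖ξ‖} ∧
        ‖∫ ξ in {ξ : EuclideanSpace ℝ (Fin d) | η ≤ ‖ξ‖},
            Complex.exp ((2 * π * Complex.I) * ((inner ℝ x ξ : ℝ) : ℂ)) *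
              ((Real.exp (-π * ε ^ 2 * ‖ξ‖ ^ 2) : ℂ) * FT f ξ)‖
          ≤ C * (∑ α ∈ mIdx d (2 * s),
                ∫ y : EuclideanSpace ℝ (Fin d), ‖mderiv α f y‖) *
              (ε ^ d)⁻¹ * (η ^ (2 * s))⁻¹ := by
  refine ⟨2 ^ (2 * s) * ∑ n ∈ Finset.range (2 * s + 1), (d : ℝ) ^ n,
    mul_pos (by positivity) (Finset.sum_pos' (fun _ _ => by positivity) ⟨0, by simp⟩), ?_⟩
  intro f hf hint x η hη ε hε
  set C := 2 ^ (2 * s) * ∑ n ∈ Finset.range (2 * s + 1), (d : ℝ) ^ n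
  set A := ∑ α ∈ mIdx d (2 * s), ∫ y, ‖mderiv α f y‖
  have hdecay (ξ : EuclideanSpace ℝ (Fin d)) (hξ : η ≤ ‖ξ‖) :
      ‖𝓕 f ξ‖ ≤ C * A * (η ^ (2 * s))⁻¹ := by
    rw [← div_eq_mul_inv, le_div_iff₀ (by positivity), mul_comm]
    calc η ^ (2 * s) * ‖𝓕 f ξ‖ ≤ ‖ξ‖ ^ (2 * s) * ‖𝓕 f ξ‖ := by gcongr
      _ ≤ C * A := pow_mul_norm_fourier_le_sum_integral_norm_mderiv (by exact_mod_cast hf) hint ξ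
  have hcont : Continuous (𝓕 f) :=
    VectorFourier.fourierIntegral_continuous Real.continuous_fourierChar continuous_inner
      (mderiv_zero f ▸ hint _ (by simp))
  rw [FT_eq_fourier, mul_right_comm _ (ε ^ d)⁻¹]
  refine (integrableOn_and_norm_setIntegral_le_of_norm_le_gaussian
    (M := C * A * (η ^ (2 * s))⁻¹) ?_ (measurableSet_le measurable_const measurable_norm)
    (by positivity) hε ?_).imp_right
    (·.trans_eq (by rw [finrank_euclideanSpace_fin]))
  · fun_prop
  · intro ξ hξ
    have hphase : (2 * π * Complex.I * (inner ℝ x ξ : ℂ)).re = 0 := by simp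
    rw [norm_mul, norm_mul, Complex.norm_exp, hphase, Real.exp_zero, one_mul, Complex.norm_real,
      norm_of_nonneg (exp_pos _).le, mul_comm]
    gcongr
    exact hdecay ξ hξ

/-- **Core high-frequency estimate of Theorem 3.2.**
Let `d ≥ 1`, `s ≥ 1` and let `f : ℝ^d → ℂ` be of class `C^{2s}` with `D^α f` integrable
for every multi-index `α` with `|α| ≤ 2s`.  Then there is a constant `C > 0` depending
only on `d` and `s` such that for all `x ∈ ℝ^d`, `η > 0` and `ε > 0`,
`|∫_{‖ξ‖ ≥ η} e^{2πi x·ξ} e^{-π ε² ‖ξ‖²} f̂(ξ) dξ| ≤ C (∑_{|α| ≤ 2s} ‖D^α f‖_{L¹}) ε^{-d} η^{-2s}`,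
the integral converging absolutely. -/
theorem high_frequency_loss_estimate (d s : ℕ) (hd : 1 ≤ d) (hs : 1 ≤ s) :
    ∃ C : ℝ, 0 < C ∧ ∀ f : EuclideanSpace ℝ (Fin d) → ℂ,
      ContDiff ℝ (2 * s) f →
      (∀ α : Fin d → ℕ, (∑ i, α i) ≤ 2 * s → Integrable (mderiv α f)) →
      ∀ x : EuclideanSpace ℝ (Fin d), ∀ η : ℝ, 0 < η → ∀ ε : ℝ, 0 < ε →
        IntegrableOn (fun ξ : EuclideanSpace ℝ (Fin d) =>
            Complex.exp ((2 * π * Complex.I) * ((inner ℝ x ξ : ℝ) : ℂ)) *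
              ((Real.exp (-π * ε ^ 2 * ‖ξ‖ ^ 2) : ℂ) * FT f ξ))
          {ξ : EuclideanSpace ℝ (Fin d) | η ≤ ‖ξ‖} ∧
        ‖∫ ξ in {ξ : EuclideanSpace ℝ (Fin d) | η ≤ ‖ξ‖},
            Complex.exp ((2 * π * Complex.I) * ((inner ℝ x ξ : ℝ) : ℂ)) *
              ((Real.exp (-π * ε ^ 2 * ‖ξ‖ ^ 2) : ℂ) * FT f ξ)‖
          ≤ C * (∑ α ∈ mIdx d (2 * s),
                ∫ y : EuclideanSpace ℝ (Fin d), ‖mderiv α f y‖) *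
              (ε ^ d)⁻¹ * (η ^ (2 * s))⁻¹ :=
  high_frequency_loss_estimate_general d s
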